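/- arXiv:1303.4753 — 3 statements merged into one kernel-verified Lean document; each statement's English description precedes it below -/
import Mathlib

section
/- Let H be a complex Hilbert space, let T be a bounded self-adjoint operator on H with T ≥ c·1 for some c > 0, and let S be a bounded self-adjoint operator such that |⟨x, Sx⟩| ≤ a⟨x, Tx⟩ for all x ∈ H, where 0 ≤ a < 1. Set L := T^{−1/2} S T^{−1/2}. Then T + S is invertible and ‖(T + S)⁻¹ − T⁻¹‖ ≤ ‖T⁻¹‖·‖L‖/(1 − ‖L‖) ≤ ‖T⁻¹‖·a/(1 − a). -/
/-! With `L = R⁻¹ S R⁻¹` one has `T + S = R (1 + L) R`, hence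
`(T + S)⁻¹ - T⁻¹ = R⁻¹ ((1 + L)⁻¹ - 1) R⁻¹`. The Neumann series bounds `‖(1 + L)⁻¹ - 1‖` by
`‖L‖ / (1 - ‖L‖)`, and the C⋆-identity gives `‖R⁻¹‖ ^ 2 = ‖T⁻¹‖`. Substituting `x = R⁻¹ y` turns
the form bound on `S` into `|⟨y, L y⟩| ≤ a ‖y‖ ^ 2`, so `‖L‖ ≤ a` because `L` is self-adjoint. -/

open scoped InnerProductSpace

theorem NormedRing.norm_inverse_one_add_sub_one_le {A : Type*} [NormedRing A]
    [HasSummableGeomSeries A] {x : A} (hx : ‖x‖ < 1) :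
    ‖Ring.inverse (1 + x) - 1‖ ≤ ‖x‖ / (1 - ‖x‖) := by
  have hx' : ‖-x‖ < 1 := by rwa [norm_neg]
  rw [← sub_neg_eq_add, ← geom_series_eq_inverse _ hx', ← geom_series_succ _ hx']
  have hbound (n : ℕ) : ‖(-x) ^ (n + 1)‖ ≤ ‖x‖ * ‖x‖ ^ n := by
    simpa [norm_neg, pow_succ'] using norm_pow_le' (-x) n.succ_pos
  exact tsum_of_norm_bounded
    ((hasSum_geometric_of_lt_one (norm_nonneg x) hx).mul_left ‖x‖) hbound

section Ring

variable {A : Type*} [Ring A] {r : A}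

theorem Ring.inverse_mul_mul_of_isUnit (hr : IsUnit r) (x : A) :
    Ring.inverse (r * x * r) = Ring.inverse r * Ring.inverse x * Ring.inverse r := by
  rw [Ring.inverse_mul (Or.inr hr), Ring.inverse_mul (Or.inl hr), mul_assoc]

theorem mul_self_add_eq_mul_one_add_mul (hr : IsUnit r) (s : A) :
    r * r + s = r * (1 + Ring.inverse r * s * Ring.inverse r) * r := by
  rw [mul_add, add_mul, mul_one, ← mul_assoc, ← mul_assoc, Ring.mul_inverse_cancel r hr,
    one_mul, Ring.inverse_mul_cancel_right r s hr]

end Ring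

section CStarRing

variable {A : Type*} [NormedRing A] [StarRing A] [CStarRing A] {r : A}

theorem IsSelfAdjoint.norm_inverse_mul_mul_inverse_le (hr : IsSelfAdjoint r) (hru : IsUnit r)
    (x : A) :
    ‖Ring.inverse r * x * Ring.inverse r‖ ≤ ‖Ring.inverse (r * r)‖ * ‖x‖ := by
  rw [Ring.inverse_mul (Or.inl hru), hr.ringInverse.norm_mul_self]
  calc ‖Ring.inverse r * x * Ring.inverse r‖
      ≤ ‖Ring.inverse r‖ * ‖x‖ * ‖Ring.inverse r‖ := norm_mul₃_le
    _ = ‖Ring.inverse r‖ ^ 2 * ‖x‖ := by ring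

theorem IsSelfAdjoint.norm_inverse_mul_self_add_sub_le [HasSummableGeomSeries A]
    (hr : IsSelfAdjoint r) (hru : IsUnit r) {s : A}
    (hl : ‖Ring.inverse r * s * Ring.inverse r‖ < 1) :
    IsUnit (r * r + s) ∧
      ‖Ring.inverse (r * r + s) - Ring.inverse (r * r)‖ ≤
        ‖Ring.inverse (r * r)‖ * ‖Ring.inverse r * s * Ring.inverse r‖ /
          (1 - ‖Ring.inverse r * s * Ring.inverse r‖) := by
  have hfactor := mul_self_add_eq_mul_one_add_mul hru s
  set l := Ring.inverse r * s * Ring.inverse r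
  have hdiff : Ring.inverse (r * r + s) - Ring.inverse (r * r) =
      Ring.inverse r * (Ring.inverse (1 + l) - 1) * Ring.inverse r := by
    rw [hfactor, Ring.inverse_mul_mul_of_isUnit hru, Ring.inverse_mul (Or.inl hru)]
    noncomm_ring
  refine ⟨?_, ?_⟩
  · rw [hfactor, ← sub_neg_eq_add]
    exact (hru.mul (isUnit_one_sub_of_norm_lt_one (by rwa [norm_neg]))).mul hru
  · calc ‖Ring.inverse (r * r + s) - Ring.inverse (r * r)‖
        ≤ ‖Ring.inverse (r * r)‖ * ‖Ring.inverse (1 + l) - 1‖ := by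
          rw [hdiff]; exact hr.norm_inverse_mul_mul_inverse_le hru _
      _ ≤ ‖Ring.inverse (r * r)‖ * (‖l‖ / (1 - ‖l‖)) := by
          gcongr; exact NormedRing.norm_inverse_one_add_sub_one_le hl
      _ = ‖Ring.inverse (r * r)‖ * ‖l‖ / (1 - ‖l‖) := by ring

end CStarRing

namespace ContinuousLinearMap

variable {𝕜 H : Type*} [RCLike 𝕜] [NormedAddCommGroup H] [InnerProductSpace 𝕜 H]
  [CompleteSpace H]

open RCLike

theorem IsSelfAdjoint.norm_le_of_abs_re_inner_le {A : H →L[𝕜] H} (hA : IsSelfAdjoint A)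
    {M : ℝ} (hM : 0 ≤ M) (h : ∀ x, |re ⟪x, A x⟫_𝕜| ≤ M * ‖x‖ ^ 2) : ‖A‖ ≤ M := by
  rw [A.norm_eq_iSup_rayleighQuotient hA.isSymmetric]
  refine ciSup_le fun x => ?_
  rcases eq_or_ne x 0 with rfl | hx
  · simpa using hM
  rw [rayleighQuotient, reApplyInnerSelf_apply, abs_div, abs_sq,
    div_le_iff₀ (by positivity), inner_re_symm]
  exact h x

theorem IsSelfAdjoint.re_inner_mul_self_apply {R : H →L[𝕜] H} (hR : IsSelfAdjoint R) (x : H) :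
    re ⟪x, (R * R) x⟫_𝕜 = ‖R x‖ ^ 2 := by
  rw [apply_norm_sq_eq_inner_adjoint_right, hR.adjoint_eq]
  rfl

theorem isUnit_of_forall_le_re_inner {T : H →L[𝕜] H} {c : ℝ} (hc : 0 < c)
    (h : ∀ x, c * ‖x‖ ^ 2 ≤ re ⟪x, T x⟫_𝕜) : IsUnit T :=
  isUnit_of_forall_le_norm_inner_map T (c := ⟨c, hc.le⟩) hc fun x => calc
    ‖x‖ ^ 2 * c = c * ‖x‖ ^ 2 := mul_comm _ _
    _ ≤ re ⟪x, T x⟫_𝕜 := h x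
    _ ≤ ‖⟪T x, x⟫_𝕜‖ := by rw [← norm_inner_symm]; exact re_le_norm _

theorem IsSelfAdjoint.norm_inverse_mul_mul_inverse_le_of_abs_re_inner_le {R S : H →L[𝕜] H}
    (hR : IsSelfAdjoint R) (hRu : IsUnit R) (hS : IsSelfAdjoint S) {a : ℝ} (ha : 0 ≤ a)
    (h : ∀ x, |re ⟪x, S x⟫_𝕜| ≤ a * ‖R x‖ ^ 2) :
    ‖Ring.inverse R * S * Ring.inverse R‖ ≤ a := by
  have hR' := hR.ringInverse
  refine IsSelfAdjoint.norm_le_of_abs_re_inner_le ?_ ha fun y => ?_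
  · exact hS.conjugate_self hR'
  set z := Ring.inverse R y
  have hRz : R z = y := congr($(Ring.mul_inverse_cancel R hRu) y)
  calc |re ⟪y, (Ring.inverse R * S * Ring.inverse R) y⟫_𝕜| = |re ⟪z, S z⟫_𝕜| :=
        congr(|re $(hR'.isSymmetric y (S z))|).symm
    _ ≤ a * ‖y‖ ^ 2 := by rw [← hRz]; exact h z

end ContinuousLinearMap

theorem inverse_add_sub_inverse_norm_le_general
    {H : Type*} [NormedAddCommGroup H] [InnerProductSpace ℂ H] [CompleteSpace H]
    (T S R : H →L[ℂ] H) (c a : ℝ) (hc : 0 < c) (ha₀ : 0 ≤ a) (ha₁ : a < 1)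
    (hS : IsSelfAdjoint S)
    (hTc : ∀ x : H, c * ‖x‖ ^ 2 ≤ (inner ℂ x (T x) : ℂ).re)
    -- `R` is the unique positive square root `T^{1/2}` of `T`:
    (hR : IsSelfAdjoint R)
    (hRsq : R ∘L R = T)
    (hSa : ∀ x : H, |(inner ℂ x (S x) : ℂ).re| ≤ a * (inner ℂ x (T x) : ℂ).re) :
    IsUnit (T + S) ∧
      ‖Ring.inverse (T + S) - Ring.inverse T‖ ≤
        ‖Ring.inverse T‖ * ‖Ring.inverse R ∘L S ∘L Ring.inverse R‖ /
          (1 - ‖Ring.inverse R ∘L S ∘L Ring.inverse R‖) ∧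
      ‖Ring.inverse T‖ * ‖Ring.inverse R ∘L S ∘L Ring.inverse R‖ /
          (1 - ‖Ring.inverse R ∘L S ∘L Ring.inverse R‖) ≤
        ‖Ring.inverse T‖ * a / (1 - a) := by
  have hRR : R * R = T := hRsq
  have hRu : IsUnit R :=
    isUnit_mul_self_iff.mp (hRR ▸ ContinuousLinearMap.isUnit_of_forall_le_re_inner hc hTc)
  have hL : ‖Ring.inverse R * S * Ring.inverse R‖ ≤ a :=
    ContinuousLinearMap.IsSelfAdjoint.norm_inverse_mul_mul_inverse_le_of_abs_re_inner_le
      hR hRu hS ha₀ fun x => by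
        rw [← ContinuousLinearMap.IsSelfAdjoint.re_inner_mul_self_apply hR, hRR]
        exact hSa x
  rw [show Ring.inverse R ∘L S ∘L Ring.inverse R = Ring.inverse R * S * Ring.inverse R from
    (mul_assoc _ _ _).symm, ← hRR]
  obtain ⟨hunit, hbound⟩ := hR.norm_inverse_mul_self_add_sub_le hRu (hL.trans_lt ha₁)
  refine ⟨hunit, hbound, ?_⟩
  have h1a : 0 < 1 - a := sub_pos.mpr ha₁
  gcongr

/-- **Lemma (form-bounded perturbation, resolvent estimate).** Let `T` be a bounded
self-adjoint operator on a complex Hilbert space with `T ≥ c·1` for some `c > 0`, let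
`R = T^{1/2}` be its (unique) positive square root, and let `S` be a bounded self-adjoint
operator with `|⟨x, Sx⟩| ≤ a ⟨x, Tx⟩` for all `x`, where `0 ≤ a < 1`.  With
`L := T^{-1/2} S T^{-1/2}`, the operator `T + S` is invertible and
`‖(T + S)⁻¹ - T⁻¹‖ ≤ ‖T⁻¹‖ ‖L‖ / (1 - ‖L‖) ≤ ‖T⁻¹‖ a / (1 - a)`. -/
theorem inverse_add_sub_inverse_norm_le
    {H : Type*} [NormedAddCommGroup H] [InnerProductSpace ℂ H] [CompleteSpace H]
    (T S R : H →L[ℂ] H) (c a : ℝ) (hc : 0 < c) (ha₀ : 0 ≤ a) (ha₁ : a < 1)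
    (hT : IsSelfAdjoint T) (hS : IsSelfAdjoint S)
    (hTc : ∀ x : H, c * ‖x‖ ^ 2 ≤ (inner ℂ x (T x) : ℂ).re)
    -- `R` is the unique positive square root `T^{1/2}` of `T`:
    (hR : IsSelfAdjoint R) (hRpos : ∀ x : H, 0 ≤ (inner ℂ x (R x) : ℂ).re)
    (hRsq : R ∘L R = T)
    (hSa : ∀ x : H, |(inner ℂ x (S x) : ℂ).re| ≤ a * (inner ℂ x (T x) : ℂ).re) :
    IsUnit (T + S) ∧
      ‖Ring.inverse (T + S) - Ring.inverse T‖ ≤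
        ‖Ring.inverse T‖ * ‖Ring.inverse R ∘L S ∘L Ring.inverse R‖ /
          (1 - ‖Ring.inverse R ∘L S ∘L Ring.inverse R‖) ∧
      ‖Ring.inverse T‖ * ‖Ring.inverse R ∘L S ∘L Ring.inverse R‖ /
          (1 - ‖Ring.inverse R ∘L S ∘L Ring.inverse R‖) ≤
        ‖Ring.inverse T‖ * a / (1 - a) :=
  inverse_add_sub_inverse_norm_le_general T S R c a hc ha₀ ha₁ hS hTc hR hRsq hSa
end

section
/- Let H be a complex Hilbert space, let c > 0, and let A, B, C, D be bounded self-adjoint operators on H with c·1 ≤ A ≤ B ≤ C and c·1 ≤ D. Then A, B, C, D are all invertible and ‖B⁻¹ − D⁻¹‖ ≤ max{‖A⁻¹ − D⁻¹‖, ‖C⁻¹ − D⁻¹‖}. -/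
/-!
Coercivity `c·1 ≤ T` with `c > 0` makes `A` and `D` strictly positive, hence invertible, and
strict positivity passes up the order to `B` and `C`. Inversion is order-reversing on strictly
positive elements, so `C⁻¹ - D⁻¹ ≤ B⁻¹ - D⁻¹ ≤ A⁻¹ - D⁻¹`. Finally, a self-adjoint `x` with
`y ≤ x ≤ z` has its spectrum in `[-‖y‖, ‖z‖]`, and `‖x‖` or `-‖x‖` lies in that spectrum.
-/

open scoped InnerProductSpace

lemma CStarAlgebra.norm_le_max_of_le_of_le {𝔄 : Type*} [CStarAlgebra 𝔄] [PartialOrder 𝔄]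
    [StarOrderedRing 𝔄] {x y z : 𝔄}
    (hy : IsSelfAdjoint y) (hz : IsSelfAdjoint z) (hyx : y ≤ x) (hxz : x ≤ z) :
    ‖x‖ ≤ max ‖y‖ ‖z‖ := by
  nontriviality 𝔄
  have hx : IsSelfAdjoint x := by simpa using (IsSelfAdjoint.of_nonneg (sub_nonneg.mpr hyx)).add hy
  rcases CStarAlgebra.norm_or_neg_norm_mem_spectrum hx with hs | hs
  · exact le_max_of_le_right <|
      (le_algebraMap_iff_spectrum_le hx).mp (hxz.trans hz.le_algebraMap_norm_self) _ hs
  · have := (algebraMap_le_iff_le_spectrum (r := -‖y‖) hx).mp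
      (by simpa using hy.neg_algebraMap_norm_le_self.trans hyx) _ hs
    exact le_max_of_le_left (by linarith)

open Ring in
lemma CStarAlgebra.norm_ringInverse_sub_le_max {𝔄 : Type*} [CStarAlgebra 𝔄] [PartialOrder 𝔄]
    [StarOrderedRing 𝔄] {a b c d : 𝔄} (ha : IsStrictlyPositive a) (hd : IsStrictlyPositive d)
    (hab : a ≤ b) (hbc : b ≤ c) :
    ‖b⁻¹ʳ - d⁻¹ʳ‖ ≤ max ‖a⁻¹ʳ - d⁻¹ʳ‖ ‖c⁻¹ʳ - d⁻¹ʳ‖ := by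
  have hb := ha.of_le hab
  have hc := hb.of_le hbc
  rw [max_comm]
  refine CStarAlgebra.norm_le_max_of_le_of_le ?_ ?_ (sub_le_sub_right ?_ _) (sub_le_sub_right ?_ _)
  · exact hc.ringInverse.isSelfAdjoint.sub hd.ringInverse.isSelfAdjoint
  · exact ha.ringInverse.isSelfAdjoint.sub hd.ringInverse.isSelfAdjoint
  · exact ringInverse_le_ringInverse hbc
  · exact ringInverse_le_ringInverse hab

namespace ContinuousLinearMap

variable {𝕜 H : Type*} [RCLike 𝕜] [NormedAddCommGroup H] [InnerProductSpace 𝕜 H] [CompleteSpace H]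

lemma isPositive_of_forall_re_inner_nonneg {T : H →L[𝕜] H} (hT : IsSelfAdjoint T)
    (h : ∀ x, 0 ≤ RCLike.re ⟪x, T x⟫_𝕜) : T.IsPositive :=
  isPositive_def'.mpr ⟨hT, fun x => by rw [reApplyInnerSelf_apply, inner_re_symm]; exact h x⟩

lemma le_of_forall_re_inner_sub_nonneg {S T : H →L[𝕜] H} (hS : IsSelfAdjoint S)
    (hT : IsSelfAdjoint T) (h : ∀ x, 0 ≤ RCLike.re ⟪x, (T - S) x⟫_𝕜) : S ≤ T :=
  isPositive_of_forall_re_inner_nonneg (hT.sub hS) h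

lemma isUnit_of_forall_mul_sq_le_re_inner {T : H →L[𝕜] H} {c : ℝ} (hc : 0 < c)
    (h : ∀ x, c * ‖x‖ ^ 2 ≤ RCLike.re ⟪x, T x⟫_𝕜) : IsUnit T := by
  refine T.isUnit_of_forall_le_norm_inner_map (c := ⟨c, hc.le⟩) hc fun x => ?_
  calc ‖x‖ ^ 2 * c = c * ‖x‖ ^ 2 := mul_comm _ _
    _ ≤ RCLike.re ⟪x, T x⟫_𝕜 := h x
    _ ≤ ‖⟪x, T x⟫_𝕜‖ := RCLike.re_le_norm _
    _ = ‖⟪T x, x⟫_𝕜‖ := norm_inner_symm _ _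

lemma isStrictlyPositive_of_forall_mul_sq_le_re_inner {T : H →L[𝕜] H} (hT : IsSelfAdjoint T)
    {c : ℝ} (hc : 0 < c) (h : ∀ x, c * ‖x‖ ^ 2 ≤ RCLike.re ⟪x, T x⟫_𝕜) : IsStrictlyPositive T :=
  ⟨(nonneg_iff_isPositive _).mpr <| isPositive_of_forall_re_inner_nonneg hT fun x =>
      (by positivity : 0 ≤ c * ‖x‖ ^ 2).trans (h x),
    isUnit_of_forall_mul_sq_le_re_inner hc h⟩

end ContinuousLinearMap

/-- **Sandwich estimate for resolvents.** Let `A, B, C, D` be bounded self-adjoint operators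
on a complex Hilbert space with `c·1 ≤ A ≤ B ≤ C` and `c·1 ≤ D` for some `c > 0` (with
`A ≤ B` meaning `⟨x, (B - A)x⟩ ≥ 0` for all `x`).  Then `A, B, C, D` are invertible and
`‖B⁻¹ - D⁻¹‖ ≤ max {‖A⁻¹ - D⁻¹‖, ‖C⁻¹ - D⁻¹‖}`. -/
theorem inverse_sandwich_estimate
    {H : Type*} [NormedAddCommGroup H] [InnerProductSpace ℂ H] [CompleteSpace H]
    (A B C D : H →L[ℂ] H) (c : ℝ) (hc : 0 < c)
    (hA : IsSelfAdjoint A) (hB : IsSelfAdjoint B) (hC : IsSelfAdjoint C)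
    (hD : IsSelfAdjoint D)
    (hcA : ∀ x : H, c * ‖x‖ ^ 2 ≤ (inner ℂ x (A x) : ℂ).re)
    (hAB : ∀ x : H, 0 ≤ (inner ℂ x ((B - A) x) : ℂ).re)
    (hBC : ∀ x : H, 0 ≤ (inner ℂ x ((C - B) x) : ℂ).re)
    (hcD : ∀ x : H, c * ‖x‖ ^ 2 ≤ (inner ℂ x (D x) : ℂ).re) :
    IsUnit A ∧ IsUnit B ∧ IsUnit C ∧ IsUnit D ∧
      ‖Ring.inverse B - Ring.inverse D‖ ≤
        max ‖Ring.inverse A - Ring.inverse D‖ ‖Ring.inverse C - Ring.inverse D‖ := by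
  have hA' := ContinuousLinearMap.isStrictlyPositive_of_forall_mul_sq_le_re_inner hA hc hcA
  have hD' := ContinuousLinearMap.isStrictlyPositive_of_forall_mul_sq_le_re_inner hD hc hcD
  have hAB' := ContinuousLinearMap.le_of_forall_re_inner_sub_nonneg hA hB hAB
  have hBC' := ContinuousLinearMap.le_of_forall_re_inner_sub_nonneg hB hC hBC
  have hB' := hA'.of_le hAB'
  exact ⟨hA'.isUnit, hB'.isUnit, (hB'.of_le hBC').isUnit, hD'.isUnit,
    CStarAlgebra.norm_ringInverse_sub_le_max hA' hD' hAB' hBC'⟩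
end

section
/- Let H be a complex Hilbert space, let h and H_ε be bounded self-adjoint operators on H with h ≥ 1 (i.e. ⟨x, hx⟩ ≥ ‖x‖² for all x), let c > 0 and let 0 < ε < 1/(2c). Suppose that (1 − cε)h − cε·1 ≤ H_ε ≤ (1 + cε)h + cε·1. Then h and H_ε are invertible and ‖H_ε⁻¹ − h⁻¹‖ ≤ 2cε/(1 − 2cε). -/
/-!
Since `h ≥ 1`, the additive error `cε·1` is absorbed into the multiplicative one:
`(1 - 2cε) h ≤ H_ε ≤ (1 + 2cε) h`. Inversion is operator antitone, so
`(1 + 2cε)⁻¹ h⁻¹ ≤ H_ε⁻¹ ≤ (1 - 2cε)⁻¹ h⁻¹`, and since `0 ≤ h⁻¹ ≤ 1` the self-adjoint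
difference `H_ε⁻¹ - h⁻¹` lies between `∓ 2cε/(1 - 2cε)`, which bounds its norm.
-/

open scoped Ring

theorem Ring.inverse_smul {R A : Type*} [Field R] [Ring A] [Algebra R A] {t : R} (ht : t ≠ 0)
    {a : A} (ha : IsUnit a) : (t • a)⁻¹ʳ = t⁻¹ • a⁻¹ʳ := by
  obtain ⟨u, rfl⟩ := ha
  simpa [Units.smul_def] using Ring.inverse_unit (Units.mk0 t ht • u)

namespace CStarAlgebra

variable {A : Type*} [CStarAlgebra A] [PartialOrder A] [StarOrderedRing A]

lemma norm_le_of_mem_Icc {a : A} {r : ℝ} (hr : 0 ≤ r)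
    (ha : a ∈ Set.Icc (-algebraMap ℝ A r) (algebraMap ℝ A r)) : ‖a‖ ≤ r := by
  obtain _ | _ := subsingleton_or_nontrivial A
  · simp [Subsingleton.elim a 0, hr]
  have hsa : IsSelfAdjoint a := by
    simpa using (IsSelfAdjoint.of_nonneg (sub_nonneg.2 ha.1)).sub (.algebraMap A (.all r))
  have hle := (le_algebraMap_iff_spectrum_le hsa).1 ha.2
  have hge := (algebraMap_le_iff_le_spectrum (r := -r) hsa).1 (by simpa using ha.1)
  rcases norm_or_neg_norm_mem_spectrum hsa with hm | hm
  · exact hle _ hm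
  · linarith [hge _ hm]

lemma norm_ringInverse_sub_ringInverse_le {a b : A} {δ : ℝ} (hδ : 0 ≤ δ) (hδ1 : δ < 1)
    (ha : 1 ≤ a) (hlow : (1 - δ) • a ≤ b) (hupp : b ≤ (1 + δ) • a) :
    ‖b⁻¹ʳ - a⁻¹ʳ‖ ≤ δ / (1 - δ) := by
  have ha_pos : IsStrictlyPositive a := isStrictlyPositive_one.of_le ha
  have hinv_le_one : a⁻¹ʳ ≤ 1 := by simpa using ringInverse_le_ringInverse ha
  have hb_inv_le : b⁻¹ʳ ≤ (1 - δ)⁻¹ • a⁻¹ʳ := by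
    rw [← Ring.inverse_smul (by linarith) ha_pos.isUnit]
    exact ringInverse_le_ringInverse hlow (ha_pos.smul (by linarith))
  have hb_inv_ge : (1 + δ)⁻¹ • a⁻¹ʳ ≤ b⁻¹ʳ := by
    rw [← Ring.inverse_smul (by linarith) ha_pos.isUnit]
    exact ringInverse_le_ringInverse hupp ((ha_pos.smul (by linarith)).of_le hlow)
  have hr : 0 ≤ δ / (1 - δ) := div_nonneg hδ (by linarith)
  refine norm_le_of_mem_Icc hr ⟨?_, ?_⟩
  · have hcoef : (1 + δ)⁻¹ - 1 = -(δ / (1 + δ)) := by field_simp; ring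
    calc -algebraMap ℝ A (δ / (1 - δ)) ≤ -(δ / (1 + δ)) • 1 := by
          rw [Algebra.algebraMap_eq_smul_one, ← neg_smul]
          exact smul_le_smul_of_nonneg_right
            (neg_le_neg (div_le_div_of_nonneg_left hδ (by linarith) (by linarith))) zero_le_one
      _ ≤ -(δ / (1 + δ)) • a⁻¹ʳ :=
          smul_le_smul_of_nonpos_left hinv_le_one (neg_nonpos.2 (by positivity))
      _ = (1 + δ)⁻¹ • a⁻¹ʳ - a⁻¹ʳ := by rw [← hcoef, sub_smul, one_smul]
      _ ≤ b⁻¹ʳ - a⁻¹ʳ := sub_le_sub_right hb_inv_ge _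
  · have hcoef : (1 - δ)⁻¹ - 1 = δ / (1 - δ) := by field_simp [show 1 - δ ≠ 0 by linarith]; ring
    calc b⁻¹ʳ - a⁻¹ʳ ≤ (1 - δ)⁻¹ • a⁻¹ʳ - a⁻¹ʳ := sub_le_sub_right hb_inv_le _
      _ = (δ / (1 - δ)) • a⁻¹ʳ := by rw [← hcoef, sub_smul, one_smul]
      _ ≤ (δ / (1 - δ)) • 1 := smul_le_smul_of_nonneg_left hinv_le_one hr
      _ = algebraMap ℝ A (δ / (1 - δ)) := (Algebra.algebraMap_eq_smul_one _).symm

end CStarAlgebra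

namespace ContinuousLinearMap

variable {𝕜 E : Type*} [RCLike 𝕜] [NormedAddCommGroup E] [InnerProductSpace 𝕜 E] [CompleteSpace E]

lemma le_of_forall_re_inner_le {S T : E →L[𝕜] E} (hS : IsSelfAdjoint S) (hT : IsSelfAdjoint T)
    (h : ∀ x, RCLike.re (inner 𝕜 x (S x)) ≤ RCLike.re (inner 𝕜 x (T x))) : S ≤ T := by
  rw [le_def, isPositive_def']
  refine ⟨hT.sub hS, fun x => ?_⟩
  simpa [reApplyInnerSelf_apply, inner_sub_left, inner_re_symm (𝕜 := 𝕜) _ x] using h x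

end ContinuousLinearMap

/-- **Abstract norm-resolvent convergence.** Let `h` and `H_ε` be bounded self-adjoint
operators on a complex Hilbert space with `h ≥ 1` (i.e. `⟨x, hx⟩ ≥ ‖x‖²` for all `x`), let
`c > 0` and `0 < ε < 1/(2c)`, and suppose the two-sided form comparison
`(1 - cε)h - cε·1 ≤ H_ε ≤ (1 + cε)h + cε·1` holds.  Then `h` and `H_ε` are invertible and
`‖H_ε⁻¹ - h⁻¹‖ ≤ 2cε/(1 - 2cε)`. -/
theorem norm_resolvent_estimate
    {H : Type*} [NormedAddCommGroup H] [InnerProductSpace ℂ H] [CompleteSpace H]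
    (h Hε : H →L[ℂ] H) (c ε : ℝ) (hc : 0 < c) (hε : 0 < ε) (hε' : ε < 1 / (2 * c))
    (hh : IsSelfAdjoint h) (hHε : IsSelfAdjoint Hε)
    (hh1 : ∀ x : H, ‖x‖ ^ 2 ≤ (inner ℂ x (h x) : ℂ).re)
    (hlow : ∀ x : H,
      (1 - c * ε) * (inner ℂ x (h x) : ℂ).re - c * ε * ‖x‖ ^ 2 ≤ (inner ℂ x (Hε x) : ℂ).re)
    (hupp : ∀ x : H,
      (inner ℂ x (Hε x) : ℂ).re ≤ (1 + c * ε) * (inner ℂ x (h x) : ℂ).re + c * ε * ‖x‖ ^ 2) :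
    IsUnit h ∧ IsUnit Hε ∧
      ‖Ring.inverse Hε - Ring.inverse h‖ ≤ 2 * c * ε / (1 - 2 * c * ε) := by
  have hδ1 : 2 * c * ε < 1 := by
    rw [lt_div_iff₀ (by positivity)] at hε'
    linarith
  have hcε : 0 ≤ c * ε := by positivity
  have hform : ∀ (t : ℝ) (T : H →L[ℂ] H) (x : H),
      (inner ℂ x ((t • T) x) : ℂ).re = t * (inner ℂ x (T x) : ℂ).re := by
    simp
  have hone : (1 : H →L[ℂ] H) ≤ h :=
    ContinuousLinearMap.le_of_forall_re_inner_le (.one _) hh fun x => by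
      simpa [← Complex.ofReal_pow] using hh1 x
  have hlow' : (1 - 2 * c * ε) • h ≤ Hε :=
    ContinuousLinearMap.le_of_forall_re_inner_le (.smul (.all _) hh) hHε fun x => by
      simp only [RCLike.re_to_complex, hform]
      linarith [hlow x, mul_le_mul_of_nonneg_left (hh1 x) hcε]
  have hupp' : Hε ≤ (1 + 2 * c * ε) • h :=
    ContinuousLinearMap.le_of_forall_re_inner_le hHε (.smul (.all _) hh) fun x => by
      simp only [RCLike.re_to_complex, hform]
      linarith [hupp x, mul_le_mul_of_nonneg_left (hh1 x) hcε]
  have hh_pos : IsStrictlyPositive h := isStrictlyPositive_one.of_le hone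
  refine ⟨hh_pos.isUnit, ((hh_pos.smul (by linarith)).of_le hlow').isUnit, ?_⟩
  exact CStarAlgebra.norm_ringInverse_sub_ringInverse_le (by positivity) hδ1 hone hlow' hupp'
end
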